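/- Suppose i < n satisfies max(DY i) = α and min(DY i) ≤ β. Then: (1) every value v ∈ DY i with v > β is consistent; (2) for every value v ∈ DY i with v < β, v is inconsistent if and only if cx(α) + 1 = cy(α) and γ holds; (3) if β ∈ DY i, then β is inconsistent if and only if cx(α) + 1 = cy(α), γ holds, and either cx(β) > cy(β) + 1, or (cx(β) = cy(β) + 1 and σ holds). -/

import Mathlib

/-! `x <ₘ y` holds iff the largest value whose multiplicities in `x` and `y` differ occurs more
often in `y`. Since `≤ₘ` is monotone in each entry, `v` is consistent for `Y i` iff
`floor(X) ≤ₘ` the multiset of `ceiling(Y)` with one copy of `α` replaced by `v`. Above `β` that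
multiset dominates `floor(X)` value by value; for `v > β` it does so strictly at `v`, while for
`v ≤ β` it agrees with `floor(X)` above `β` exactly when `cx(α) + 1 = cy(α)` and `γ` hold. In
that case the comparison is decided at `β`, where `floor(X)` has more copies of `β` unless
`v = β` and `cx(β) = cy(β) + 1`; then it passes below `β`, where `σ` decides it. -/

namespace MsetPaper

/-- The maximum element of a multiset of naturals (`0` for the empty multiset). -/
def mmax (s : Multiset ℕ) : ℕ := s.sup

/-- The strict multiset order `x <ₘ y` of the paper: either `x` is empty and `y` is not,
or both are nonempty and either `max x < max y`, or the maxima agree and the multisets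
with one occurrence of the maximum removed are again strictly ordered. -/
inductive MLt : Multiset ℕ → Multiset ℕ → Prop
  | empty {y : Multiset ℕ} : y ≠ 0 → MLt 0 y
  | maxLt {x y : Multiset ℕ} : x ≠ 0 → y ≠ 0 → mmax x < mmax y → MLt x y
  | maxEq {x y : Multiset ℕ} : x ≠ 0 → y ≠ 0 → mmax x = mmax y →
      MLt (x.erase (mmax x)) (y.erase (mmax y)) → MLt x y

/-- The (non-strict) multiset order `x ≤ₘ y`. -/
def MLe (x y : Multiset ℕ) : Prop := MLt x y ∨ x = y

/-- The multiset of values taken by a vector. -/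
def msetOf {n : ℕ} (x : Fin n → ℕ) : Multiset ℕ := (List.ofFn x : List ℕ)

/-- `(x, y)` is a satisfying assignment for the constraint `X ≤ₘ Y`. -/
def SatLe {n : ℕ} (DX DY : Fin n → Finset ℕ) (x y : Fin n → ℕ) : Prop :=
  (∀ i, x i ∈ DX i) ∧ (∀ i, y i ∈ DY i) ∧ MLe (msetOf x) (msetOf y)

/-- The value `v` is consistent for the variable `X i`. -/
def ConsX {n : ℕ} (DX DY : Fin n → Finset ℕ) (i : Fin n) (v : ℕ) : Prop :=
  ∃ x y, SatLe DX DY x y ∧ x i = v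

/-- The value `v` is consistent for the variable `Y i`. -/
def ConsY {n : ℕ} (DX DY : Fin n → Finset ℕ) (i : Fin n) (v : ℕ) : Prop :=
  ∃ x y, SatLe DX DY x y ∧ y i = v

/-- The constraint `X ≤ₘ Y` is generalised arc-consistent. -/
def GACLe {n : ℕ} (DX DY : Fin n → Finset ℕ) : Prop :=
  (∀ i, ∀ v ∈ DX i, ConsX DX DY i v) ∧ (∀ i, ∀ v ∈ DY i, ConsY DX DY i v)

/-- `cx DX hDX v` counts the indices `i` with `min (DX i) = v`
(the occurrence vector of `floor(X)`). -/
def cx {n : ℕ} (DX : Fin n → Finset ℕ) (hDX : ∀ i, (DX i).Nonempty) (v : ℕ) : ℕ :=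
  (Finset.univ.filter fun i => (DX i).min' (hDX i) = v).card

/-- `cy DY hDY v` counts the indices `i` with `max (DY i) = v`
(the occurrence vector of `ceiling(Y)`). -/
def cy {n : ℕ} (DY : Fin n → Finset ℕ) (hDY : ∀ i, (DY i).Nonempty) (v : ℕ) : ℕ :=
  (Finset.univ.filter fun i => (DY i).max' (hDY i) = v).card

lemma mmax_mem {s : Multiset ℕ} (hs : s ≠ 0) : mmax s ∈ s := by
  obtain ⟨m, hm, hmax⟩ := Finset.exists_max_image s.toFinset id (by simpa using hs)
  have : mmax s = m :=
    le_antisymm (Multiset.sup_le.2 fun x hx => hmax x (by simpa using hx))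
      (Multiset.le_sup (by simpa using hm))
  simpa [this] using hm

lemma count_eq_zero_of_mmax_lt {s : Multiset ℕ} {w : ℕ} (h : mmax s < w) : s.count w = 0 :=
  Multiset.count_eq_zero.2 fun hw => (Multiset.le_sup hw).not_gt h

def TopDiffLt (a b : Multiset ℕ) : Prop :=
  ∃ v, a.count v < b.count v ∧ ∀ w, v < w → a.count w = b.count w

lemma topDiffLt_cons_iff {a b : Multiset ℕ} (m : ℕ) :
    TopDiffLt (m ::ₘ a) (m ::ₘ b) ↔ TopDiffLt a b := by
  simp only [TopDiffLt, Multiset.count_cons, add_lt_add_iff_right, add_left_inj]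

lemma topDiffLt_of_forall_lt_mmax {a b : Multiset ℕ} (hb : b ≠ 0) (h : ∀ x ∈ a, x < mmax b) :
    TopDiffLt a b := by
  refine ⟨mmax b, ?_, fun w hw => ?_⟩
  · rw [Multiset.count_eq_zero.2 fun hm => (h _ hm).false]
    exact Multiset.count_pos.2 (mmax_mem hb)
  · rw [count_eq_zero_of_mmax_lt hw,
      Multiset.count_eq_zero.2 fun hm => (h _ hm).not_gt ‹_›]

lemma topDiffLt_of_mlt {a b : Multiset ℕ} (h : MLt a b) : TopDiffLt a b := by
  induction h with
  | empty hy => exact topDiffLt_of_forall_lt_mmax hy (by simp)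
  | maxLt _ hy hlt =>
    exact topDiffLt_of_forall_lt_mmax hy fun x hx => (Multiset.le_sup hx).trans_lt hlt
  | @maxEq x y hx hy heq _ ih =>
    rw [← topDiffLt_cons_iff (mmax x), Multiset.cons_erase (mmax_mem hx), heq,
      Multiset.cons_erase (mmax_mem hy)] at ih
    exact ih

lemma mmax_le_of_topDiffLt {a b : Multiset ℕ} (h : TopDiffLt a b) : mmax a ≤ mmax b := by
  obtain ⟨v, hv, habove⟩ := h
  have hvb : v ∈ b := Multiset.count_pos.1 (by omega)
  refine Multiset.sup_le.2 fun x hx => ?_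
  rcases le_or_gt x v with hxv | hvx
  · exact hxv.trans (Multiset.le_sup hvb)
  · exact Multiset.le_sup (Multiset.count_pos.1 (habove x hvx ▸ Multiset.count_pos.2 hx))

lemma mlt_of_topDiffLt {a b : Multiset ℕ} (h : TopDiffLt a b) : MLt a b := by
  induction b using Multiset.strongInductionOn generalizing a with
  | ih b ih =>
    have hb : b ≠ 0 := by
      rintro rfl
      obtain ⟨v, hv, -⟩ := h
      simp at hv
    rcases eq_or_ne a 0 with rfl | ha
    · exact MLt.empty hb
    rcases (mmax_le_of_topDiffLt h).lt_or_eq with hlt | heq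
    · exact MLt.maxLt ha hb hlt
    refine MLt.maxEq ha hb heq (ih _ (Multiset.erase_lt.2 (mmax_mem hb)) ?_)
    rwa [← topDiffLt_cons_iff (mmax a), Multiset.cons_erase (mmax_mem ha), heq,
      Multiset.cons_erase (mmax_mem hb)]

lemma exists_top_count_ne {a b : Multiset ℕ} (hab : a ≠ b) :
    ∃ u, a.count u ≠ b.count u ∧ ∀ w, u < w → a.count w = b.count w := by
  classical
  set S := (a + b).toFinset.filter fun w => a.count w ≠ b.count w
  have hS : S.Nonempty := by
    obtain ⟨w, hw⟩ : ∃ w, a.count w ≠ b.count w := by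
      by_contra! h
      exact hab (Multiset.ext.2 h)
    refine ⟨w, Finset.mem_filter.2 ⟨Multiset.mem_toFinset.2 ?_, hw⟩⟩
    by_contra hab'
    simp only [Multiset.mem_add, not_or, ← Multiset.count_eq_zero] at hab'
    omega
  refine ⟨S.max' hS, (Finset.mem_filter.1 (S.max'_mem hS)).2, fun w hw => ?_⟩
  by_contra hne
  refine (S.le_max' w (Finset.mem_filter.2 ⟨Multiset.mem_toFinset.2 ?_, hne⟩)).not_gt hw
  by_contra hab'
  simp only [Multiset.mem_add, not_or, ← Multiset.count_eq_zero] at hab'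
  omega

lemma mlt_of_count_lt_of_count_le {a b : Multiset ℕ} {v : ℕ} (hv : a.count v < b.count v)
    (habove : ∀ w, v < w → a.count w ≤ b.count w) : MLt a b := by
  obtain ⟨u, hu, hu_above⟩ := exists_top_count_ne (a := a) (b := b) (by rintro rfl; omega)
  refine mlt_of_topDiffLt ⟨u, ?_, hu_above⟩
  rcases lt_trichotomy u v with huv | rfl | hvu
  · exact absurd (hu_above v huv) hv.ne
  · exact hv
  · exact (habove u hvu).lt_of_ne hu

lemma mlt_asymm {a b : Multiset ℕ} (h : MLt a b) (h' : MLt b a) : False := by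
  obtain ⟨v, hv, hv_above⟩ := topDiffLt_of_mlt h
  obtain ⟨w, hw, hw_above⟩ := topDiffLt_of_mlt h'
  rcases lt_trichotomy v w with hvw | rfl | hwv
  · exact (hv_above w hvw).not_gt hw
  · omega
  · exact (hw_above v hwv).not_gt hv

lemma mlt_trans {a b c : Multiset ℕ} (h : MLt a b) (h' : MLt b c) : MLt a c := by
  obtain ⟨v, hv, hv_above⟩ := topDiffLt_of_mlt h
  obtain ⟨w, hw, hw_above⟩ := topDiffLt_of_mlt h'
  have hab : ∀ u, v ≤ u → a.count u ≤ b.count u := fun u hu =>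
    hu.lt_or_eq.elim (fun hu => (hv_above u hu).le) fun hu => hu ▸ hv.le
  have hbc : ∀ u, w ≤ u → b.count u ≤ c.count u := fun u hu =>
    hu.lt_or_eq.elim (fun hu => (hw_above u hu).le) fun hu => hu ▸ hw.le
  refine mlt_of_count_lt_of_count_le (v := max v w) ?_ fun u hu =>
    (hab u (le_max_left _ _ |>.trans hu.le)).trans (hbc u (le_max_right _ _ |>.trans hu.le))
  rcases le_total v w with hvw | hwv
  · rw [max_eq_right hvw]
    exact (hab w hvw).trans_lt hw
  · rw [max_eq_left hwv]
    exact hv.trans_le (hbc v hwv)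

lemma not_mle_iff {a b : Multiset ℕ} : ¬ MLe a b ↔ MLt b a := by
  refine ⟨fun h => ?_, fun h h' => ?_⟩
  · obtain ⟨u, hu, hu_above⟩ := exists_top_count_ne fun hab => h (Or.inr hab)
    rcases hu.lt_or_gt with hlt | hgt
    · exact absurd (Or.inl (mlt_of_topDiffLt ⟨u, hlt, hu_above⟩)) h
    · exact mlt_of_topDiffLt ⟨u, hgt, fun w hw => (hu_above w hw).symm⟩
  · rcases h' with h' | rfl
    · exact mlt_asymm h h'
    · exact mlt_asymm h h

lemma mle_trans {a b c : Multiset ℕ} (h : MLe a b) (h' : MLe b c) : MLe a c := by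
  rcases h with h | rfl
  · rcases h' with h' | rfl
    · exact Or.inl (mlt_trans h h')
    · exact Or.inl h
  · exact h'

lemma mlt_cons_of_lt {c c' : ℕ} (hc : c < c') (s : Multiset ℕ) : MLt (c ::ₘ s) (c' ::ₘ s) := by
  refine mlt_of_topDiffLt ⟨c', ?_, fun w hw => ?_⟩ <;>
    simp only [Multiset.count_cons] <;> split_ifs <;> omega

lemma mle_cons {c c' : ℕ} {s t : Multiset ℕ} (hc : c ≤ c') (hst : MLe s t) :
    MLe (c ::ₘ s) (c' ::ₘ t) := by
  have hs : MLe (c ::ₘ s) (c ::ₘ t) := by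
    rcases hst with hst | rfl
    · exact Or.inl (mlt_of_topDiffLt ((topDiffLt_cons_iff c).2 (topDiffLt_of_mlt hst)))
    · exact Or.inr rfl
  rcases hc.lt_or_eq with hc | rfl
  · exact mle_trans hs (Or.inl (mlt_cons_of_lt hc t))
  · exact hs

lemma msetOf_eq_map {n : ℕ} (x : Fin n → ℕ) : msetOf x = Finset.univ.val.map x := by
  simp [msetOf, List.ofFn_eq_map, Fin.univ_def]

lemma mle_msetOf_of_le {n : ℕ} {f g : Fin n → ℕ} (h : ∀ j, f j ≤ g j) :
    MLe (msetOf f) (msetOf g) := by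
  rw [msetOf_eq_map, msetOf_eq_map]
  induction (Finset.univ : Finset (Fin n)).val using Multiset.induction_on with
  | empty => exact Or.inr rfl
  | cons j s ih =>
    rw [Multiset.map_cons, Multiset.map_cons]
    exact mle_cons (h j) ih

lemma count_msetOf {n : ℕ} (x : Fin n → ℕ) (w : ℕ) :
    (msetOf x).count w = (Finset.univ.filter fun j => x j = w).card := by
  rw [msetOf_eq_map, Multiset.count_map]
  simp only [eq_comm (a := w)]
  rfl

lemma cons_msetOf_update {n : ℕ} (f : Fin n → ℕ) (i : Fin n) (v : ℕ) :
    f i ::ₘ msetOf (Function.update f i v) = v ::ₘ msetOf f := by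
  have hrest (g : Fin n → ℕ) : msetOf g = g i ::ₘ (Finset.univ.erase i).val.map g := by
    rw [msetOf_eq_map, ← Multiset.map_cons, ← Finset.insert_val_of_notMem (Finset.notMem_erase i _),
      Finset.insert_erase (Finset.mem_univ i)]
  rw [hrest, hrest f, Function.update_self, Multiset.cons_swap]
  congr 2
  exact Multiset.map_congr rfl fun j (hj : j ∈ Finset.univ.erase i) =>
    Function.update_of_ne (Finset.ne_of_mem_erase hj) _ _

lemma consY_iff {n : ℕ} {DX DY : Fin n → Finset ℕ} (hDX : ∀ j, (DX j).Nonempty)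
    (hDY : ∀ j, (DY j).Nonempty) (i : Fin n) (v : ℕ) :
    ConsY DX DY i v ↔ v ∈ DY i ∧ MLe (msetOf fun j => (DX j).min' (hDX j))
      (msetOf (Function.update (fun j => (DY j).max' (hDY j)) i v)) := by
  constructor
  · rintro ⟨x, y, ⟨hx, hy, hxy⟩, rfl⟩
    refine ⟨hy i, mle_trans (mle_trans ?_ hxy) ?_⟩
    · exact mle_msetOf_of_le fun j => Finset.min'_le _ _ (hx j)
    · refine mle_msetOf_of_le fun j => ?_
      rcases eq_or_ne j i with rfl | hj
      · simp
      · simpa [hj] using Finset.le_max' _ _ (hy j)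
  · rintro ⟨hv, hle⟩
    refine ⟨_, _, ⟨fun j => Finset.min'_mem _ _, fun j => ?_, hle⟩, Function.update_self ..⟩
    rcases eq_or_ne j i with rfl | hj
    · simpa using hv
    · simpa [hj] using Finset.max'_mem _ _

lemma count_eq_of_mlt_of_count_le {a b : Multiset ℕ} {u : ℕ} (h : MLt b a)
    (hle : ∀ w, u < w → a.count w ≤ b.count w) (w : ℕ) (hw : u < w) :
    a.count w = b.count w := by
  by_contra hne
  refine mlt_asymm (mlt_of_count_lt_of_count_le ((hle w hw).lt_of_ne hne) fun w' hw' => ?_) h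
  exact hle w' (hw.trans hw')

lemma count_add_ite_of_cons_eq {b c : Multiset ℕ} {α v : ℕ} (hb : α ::ₘ b = v ::ₘ c) (w : ℕ) :
    b.count w + (if w = α then 1 else 0) = c.count w + (if w = v then 1 else 0) := by
  simpa only [Multiset.count_cons] using congrArg (Multiset.count w) hb

-- The `α` and `β` of the paper, for `a = floor(X)` and `c = ceiling(Y)`.
structure IsPivotPair (a c : Multiset ℕ) (α β : ℕ) : Prop where
  count_lt : a.count α < c.count α
  count_eq_of_gt : ∀ w, α < w → a.count w = c.count w
  lt : β < α
  count_gt : c.count β < a.count β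
  count_le_of_mem_Ioo : ∀ w, β < w → w < α → a.count w ≤ c.count w

namespace IsPivotPair

variable {a b c : Multiset ℕ} {α β v : ℕ}

-- A hypothesis `α ::ₘ b = v ::ₘ c` says that `b` is `c` with one `α` replaced by `v`.
lemma count_le (h : IsPivotPair a c α β) (hb : α ::ₘ b = v ::ₘ c) {w : ℕ} (hβw : β < w)
    (hvw : v < w) : a.count w ≤ b.count w := by
  have hw := count_add_ite_of_cons_eq hb w
  rcases lt_trichotomy w α with hwα | rfl | hαw
  · have := h.count_le_of_mem_Ioo w hβw hwα
    simp only [hwα.ne, hvw.ne', if_false] at hw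
    omega
  · have := h.count_lt
    simp only [hvw.ne', if_true, if_false] at hw
    omega
  · have := h.count_eq_of_gt w hαw
    simp only [hαw.ne', hvw.ne', if_false] at hw
    omega

lemma mlt_of_lt (h : IsPivotPair a c α β) (hb : α ::ₘ b = v ::ₘ c) (hβv : β < v) : MLt a b := by
  refine mlt_of_count_lt_of_count_le ?_ fun w hvw => h.count_le hb (hβv.trans hvw) hvw
  have hv := count_add_ite_of_cons_eq hb v
  rcases lt_trichotomy v α with hvα | rfl | hαv
  · have := h.count_le_of_mem_Ioo v hβv hvα
    simp only [hvα.ne, if_true, if_false] at hv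
    omega
  · have := h.count_lt
    simp only [if_true] at hv
    omega
  · have := h.count_eq_of_gt v hαv
    simp only [hαv.ne', if_true, if_false] at hv
    omega

lemma count_eq_above_iff (h : IsPivotPair a c α β) (hb : α ::ₘ b = v ::ₘ c) (hvβ : v ≤ β) :
    (∀ w, β < w → a.count w = b.count w) ↔ a.count α + 1 = c.count α ∧
      (β = α - 1 ∨ ∀ w, β < w → w < α → a.count w = c.count w) := by
  have hbc : ∀ w, β < w → b.count w + (if w = α then 1 else 0) = c.count w := fun w hw => by
    simpa [(hvβ.trans_lt hw).ne'] using count_add_ite_of_cons_eq hb w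
  constructor
  · intro heq
    refine ⟨?_, Or.inr fun w hβw hwα => ?_⟩
    · simpa [heq α h.lt] using hbc α h.lt
    · simpa [heq w hβw, hwα.ne] using hbc w hβw
  · rintro ⟨hα, hγ⟩ w hβw
    have hw := hbc w hβw
    rcases lt_trichotomy w α with hwα | rfl | hαw
    · have : a.count w = c.count w := hγ.elim (fun _ => by omega) fun hγ => hγ w hβw hwα
      simp only [hwα.ne, if_false] at hw
      omega
    · simp only [if_true] at hw
      omega
    · have := h.count_eq_of_gt w hαw
      simp only [hαw.ne', if_false] at hw
      omega

lemma mlt_iff_of_lt (h : IsPivotPair a c α β) (hb : α ::ₘ b = v ::ₘ c) (hvβ : v < β) :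
    MLt b a ↔ a.count α + 1 = c.count α ∧
      (β = α - 1 ∨ ∀ w, β < w → w < α → a.count w = c.count w) := by
  rw [← h.count_eq_above_iff hb hvβ.le]
  have hle : ∀ w, β < w → a.count w ≤ b.count w := fun w hw => h.count_le hb hw (hvβ.trans hw)
  refine ⟨fun hlt => count_eq_of_mlt_of_count_le hlt hle, fun heq =>
    mlt_of_topDiffLt ⟨β, ?_, fun w hw => (heq w hw).symm⟩⟩
  have hβ := count_add_ite_of_cons_eq hb β
  have := h.count_gt
  simp only [h.lt.ne, hvβ.ne', if_false] at hβ
  omega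

lemma mlt_iff_of_eq (h : IsPivotPair a c α β) (hb : α ::ₘ b = β ::ₘ c) :
    MLt b a ↔ a.count α + 1 = c.count α ∧
      (β = α - 1 ∨ ∀ w, β < w → w < α → a.count w = c.count w) ∧
      (c.count β + 1 < a.count β ∨ (a.count β = c.count β + 1 ∧
        ∃ t, t < β ∧ c.count t < a.count t ∧ ∀ w, t < w → w < β → a.count w = c.count w)) := by
  rw [← and_assoc, ← h.count_eq_above_iff hb le_rfl]
  have hbβ : b.count β = c.count β + 1 := by
    simpa [h.lt.ne] using count_add_ite_of_cons_eq hb β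
  have hbelow : ∀ w, w < β → b.count w = c.count w := fun w hw => by
    simpa [hw.ne, (hw.trans h.lt).ne] using count_add_ite_of_cons_eq hb w
  constructor
  · intro hlt
    have heq := count_eq_of_mlt_of_count_le hlt fun w hw => h.count_le hb hw hw
    refine ⟨heq, ?_⟩
    obtain ⟨t, ht, ht_above⟩ := topDiffLt_of_mlt hlt
    rcases lt_trichotomy t β with htβ | rfl | hβt
    · have := ht_above β htβ
      refine Or.inr ⟨by omega, t, htβ, hbelow t htβ ▸ ht, fun w htw hwβ => ?_⟩
      rw [← hbelow w hwβ, ht_above w htw]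
    · exact Or.inl (by omega)
    · exact absurd (heq t hβt) ht.ne'
  · rintro ⟨heq, hβ | ⟨hβ, t, htβ, ht, ht_eq⟩⟩
    · exact mlt_of_topDiffLt ⟨β, by omega, fun w hw => (heq w hw).symm⟩
    · refine mlt_of_topDiffLt ⟨t, hbelow t htβ ▸ ht, fun w htw => ?_⟩
      rcases lt_trichotomy w β with hwβ | rfl | hβw
      · rw [hbelow w hwβ, ht_eq w htw hwβ]
      · omega
      · exact (heq w hβw).symm

end IsPivotPair

lemma not_consY_iff {n : ℕ} {DX DY : Fin n → Finset ℕ} (hDX : ∀ j, (DX j).Nonempty)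
    (hDY : ∀ j, (DY j).Nonempty) {i : Fin n} {v : ℕ} (hv : v ∈ DY i) :
    ¬ ConsY DX DY i v ↔ MLt (msetOf (Function.update (fun j => (DY j).max' (hDY j)) i v))
      (msetOf fun j => (DX j).min' (hDX j)) := by
  rw [consY_iff, and_iff_right hv, not_mle_iff]

theorem stmt12_general (n : ℕ) (DX DY : Fin n → Finset ℕ)
    (hDX : ∀ i, (DX i).Nonempty) (hDY : ∀ i, (DY i).Nonempty)
    (α : ℕ)
    (hα1 : cx DX hDX α < cy DY hDY α)
    (hα2 : ∀ b : ℕ, α < b → cx DX hDX b = cy DY hDY b)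
    (β : ℕ) (hβα : β < α)
    (hβ1 : cy DY hDY β < cx DX hDX β)
    (hβ2 : ∀ v : ℕ, β < v → v < α → cx DX hDX v ≤ cy DY hDY v)
    (γ : Prop) (hγ : γ ↔ (β = α - 1 ∨ ∀ v : ℕ, β < v → v < α → cx DX hDX v = cy DY hDY v))
    (σ : Prop) (hσ : σ ↔ ∃ a : ℕ, a < β ∧ cy DY hDY a < cx DX hDX a ∧
      ∀ w : ℕ, a < w → w < β → cx DX hDX w = cy DY hDY w)
    (i : Fin n) (hmax : (DY i).max' (hDY i) = α) :
    (∀ v ∈ DY i, β < v → ConsY DX DY i v) ∧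
    (∀ v ∈ DY i, v < β →
      (¬ ConsY DX DY i v ↔ cx DX hDX α + 1 = cy DY hDY α ∧ γ)) ∧
    (β ∈ DY i →
      (¬ ConsY DX DY i β ↔
        cx DX hDX α + 1 = cy DY hDY α ∧ γ ∧
          (cy DY hDY β + 1 < cx DX hDX β ∨
           (cx DX hDX β = cy DY hDY β + 1 ∧ σ)))) := by
  have hcx (w : ℕ) : cx DX hDX w = (msetOf fun j => (DX j).min' (hDX j)).count w :=
    (count_msetOf _ w).symm
  have hcy (w : ℕ) : cy DY hDY w = (msetOf fun j => (DY j).max' (hDY j)).count w :=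
    (count_msetOf _ w).symm
  simp only [hcx, hcy] at hα1 hα2 hβ1 hβ2 hγ hσ ⊢
  have hP : IsPivotPair _ _ α β := ⟨hα1, hα2, hβα, hβ1, hβ2⟩
  have hb : ∀ v, α ::ₘ msetOf (Function.update (fun j => (DY j).max' (hDY j)) i v) =
      v ::ₘ msetOf fun j => (DY j).max' (hDY j) := fun v => hmax ▸ cons_msetOf_update _ i v
  refine ⟨fun v hv hβv => ?_, fun v hv hvβ => ?_, fun hβ => ?_⟩
  · exact (consY_iff hDX hDY i v).2 ⟨hv, Or.inl (hP.mlt_of_lt (hb v) hβv)⟩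
  · rw [not_consY_iff hDX hDY hv, hγ]
    exact hP.mlt_iff_of_lt (hb v) hvβ
  · rw [not_consY_iff hDX hDY hβ, hγ, hσ]
    exact hP.mlt_iff_of_eq (hb β)

/-- Theorem 8 of the paper (values of `Y i` when `max(DY i) = α` and `min(DY i) ≤ β`). -/
theorem stmt12 (n : ℕ) (hn : 1 ≤ n) (DX DY : Fin n → Finset ℕ)
    (hDX : ∀ i, (DX i).Nonempty) (hDY : ∀ i, (DY i).Nonempty)
    (α : ℕ)
    (hα1 : cx DX hDX α < cy DY hDY α)
    (hα2 : ∀ b : ℕ, α < b → cx DX hDX b = cy DY hDY b)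
    (β : ℕ) (hβα : β < α)
    (hβ1 : cy DY hDY β < cx DX hDX β)
    (hβ2 : ∀ v : ℕ, β < v → v < α → cx DX hDX v ≤ cy DY hDY v)
    (γ : Prop) (hγ : γ ↔ (β = α - 1 ∨ ∀ v : ℕ, β < v → v < α → cx DX hDX v = cy DY hDY v))
    (σ : Prop) (hσ : σ ↔ ∃ a : ℕ, a < β ∧ cy DY hDY a < cx DX hDX a ∧
      ∀ w : ℕ, a < w → w < β → cx DX hDX w = cy DY hDY w)
    (i : Fin n) (hmax : (DY i).max' (hDY i) = α) (hmin : (DY i).min' (hDY i) ≤ β) :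
    (∀ v ∈ DY i, β < v → ConsY DX DY i v) ∧
    (∀ v ∈ DY i, v < β →
      (¬ ConsY DX DY i v ↔ cx DX hDX α + 1 = cy DY hDY α ∧ γ)) ∧
    (β ∈ DY i →
      (¬ ConsY DX DY i β ↔
        cx DX hDX α + 1 = cy DY hDY α ∧ γ ∧
          (cy DY hDY β + 1 < cx DX hDX β ∨
           (cx DX hDX β = cy DY hDY β + 1 ∧ σ)))) :=
  stmt12_general n DX DY hDX hDY α hα1 hα2 β hβα hβ1 hβ2 γ hγ σ hσ i hmax

end MsetPaper
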